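/- Let h ∈ ℂ⁵ be nonzero and Θ a 5×5 matrix all of whose entries are nonzero. Define the 6×5 matrices G₁ = [diag(h)Θ ; 0_{1×5}] and G₂ = [0_{1×5} ; diag(h)Θ]. Then the 6×10 matrix [G₁ G₂] has the property that G₁ and G₂ are linearly independent vector groups: no column of G₁ is in the span of the columns of G₂ and vice versa. -/

import Mathlib

/-! Let `i` be the first index with `h i ≠ 0`. Row `i` of `G₂` is built from `h (i - 1) = 0`
(or is the zero row when `i = 0`), so every vector in the column span of `G₂` vanishes at
row `i`, while column `m` of `G₁` has the entry `h i * Θ i m ≠ 0` there. Symmetrically, with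
`i` the last index with `h i ≠ 0`, row `i + 1` separates the columns of `G₂` from the column
span of `G₁`. -/

theorem Submodule.apply_eq_zero_of_mem_span {R ι : Type*} [Semiring R] {s : Set (ι → R)}
    {v : ι → R} (t : ι) (hs : ∀ w ∈ s, w t = 0) (hv : v ∈ Submodule.span R s) : v t = 0 :=
  Submodule.span_le (p := LinearMap.ker (LinearMap.proj t)).2 hs hv

theorem Submodule.notMem_span_of_apply_ne_zero {R ι : Type*} [Semiring R] {s : Set (ι → R)}
    {v : ι → R} (t : ι) (hs : ∀ w ∈ s, w t = 0) (hv : v t ≠ 0) : v ∉ Submodule.span R s :=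
  fun hmem => hv (Submodule.apply_eq_zero_of_mem_span t hs hmem)

section ShiftedStack

variable {R κ : Type*} [Semiring R] [NoZeroDivisors R] {n : ℕ}

theorem col_top_notMem_span_cols_bottom (h : Fin n → R) (hh : h ≠ 0)
    (Θ : Matrix (Fin n) κ R) (hΘ : ∀ i j, Θ i j ≠ 0)
    (G1 G2 : Matrix (Fin (n + 1)) κ R)
    (hG1 : ∀ t j, G1 t j = if ht : (t : ℕ) < n then h ⟨t, ht⟩ * Θ ⟨t, ht⟩ j else 0)
    (hG2 : ∀ t j, G2 t j = if ht : 0 < (t : ℕ)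
        then h ⟨(t : ℕ) - 1, by have := t.isLt; omega⟩ *
             Θ ⟨(t : ℕ) - 1, by have := t.isLt; omega⟩ j else 0)
    (m : κ) :
    (fun t => G1 t m) ∉ Submodule.span R (Set.range fun j => fun t => G2 t j) := by
  obtain ⟨i, hi, hmin⟩ := wellFounded_lt.has_min {i | h i ≠ 0} (Function.ne_iff.mp hh)
  have hbefore : ∀ j < i, h j = 0 := fun j hj => by_contra fun hj0 => hmin j hj0 hj
  refine Submodule.notMem_span_of_apply_ne_zero (Fin.castSucc i) ?_ ?_
  · refine Set.forall_mem_range.2 fun j => ?_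
    dsimp only
    rw [hG2]
    split_ifs with hi0
    · rw [hbefore _ (Fin.lt_def.2 (by simp only [Fin.val_castSucc] at hi0 ⊢; omega)), zero_mul]
    · rfl
  · simpa [hG1] using mul_ne_zero hi (hΘ i m)

theorem col_bottom_notMem_span_cols_top (h : Fin n → R) (hh : h ≠ 0)
    (Θ : Matrix (Fin n) κ R) (hΘ : ∀ i j, Θ i j ≠ 0)
    (G1 G2 : Matrix (Fin (n + 1)) κ R)
    (hG1 : ∀ t j, G1 t j = if ht : (t : ℕ) < n then h ⟨t, ht⟩ * Θ ⟨t, ht⟩ j else 0)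
    (hG2 : ∀ t j, G2 t j = if ht : 0 < (t : ℕ)
        then h ⟨(t : ℕ) - 1, by have := t.isLt; omega⟩ *
             Θ ⟨(t : ℕ) - 1, by have := t.isLt; omega⟩ j else 0)
    (m : κ) :
    (fun t => G2 t m) ∉ Submodule.span R (Set.range fun j => fun t => G1 t j) := by
  obtain ⟨i, hi, hmax⟩ := wellFounded_gt.has_min {i | h i ≠ 0} (Function.ne_iff.mp hh)
  have hafter : ∀ j, i < j → h j = 0 := fun j hj => by_contra fun hj0 => hmax j hj0 hj
  refine Submodule.notMem_span_of_apply_ne_zero (Fin.succ i) ?_ ?_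
  · refine Set.forall_mem_range.2 fun j => ?_
    dsimp only
    rw [hG1]
    split_ifs
    · rw [hafter _ (Fin.lt_def.2 (by simp)), zero_mul]
    · rfl
  · simpa [hG2] using mul_ne_zero hi (hΘ i m)

end ShiftedStack

theorem stmt_18 (h : Fin 5 → ℂ) (hh : h ≠ 0)
    (Θ : Matrix (Fin 5) (Fin 5) ℂ) (hΘ : ∀ i j, Θ i j ≠ 0)
    (G1 G2 : Matrix (Fin 6) (Fin 5) ℂ)
    (hG1 : ∀ (t : Fin 6) (j : Fin 5),
      G1 t j = if ht : (t : ℕ) < 5 then h ⟨t, ht⟩ * Θ ⟨t, ht⟩ j else 0)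
    (hG2 : ∀ (t : Fin 6) (j : Fin 5),
      G2 t j = if ht : 0 < (t : ℕ)
        then h ⟨(t : ℕ) - 1, by have := t.isLt; omega⟩ *
             Θ ⟨(t : ℕ) - 1, by have := t.isLt; omega⟩ j else 0) :
    (∀ m : Fin 5, (fun t => G1 t m) ∉
      Submodule.span ℂ (Set.range fun j : Fin 5 => fun t => G2 t j)) ∧
    (∀ m : Fin 5, (fun t => G2 t m) ∉
      Submodule.span ℂ (Set.range fun j : Fin 5 => fun t => G1 t j)) :=
  ⟨col_top_notMem_span_cols_bottom h hh Θ hΘ G1 G2 hG1 hG2,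
    col_bottom_notMem_span_cols_top h hh Θ hΘ G1 G2 hG1 hG2⟩
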